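/- arXiv:1002.4848 — 2 statements merged into one kernel-verified Lean document; each statement's English description precedes it below -/
import Mathlib

section
/- With the notation above, the map ν_𝕂 is antisymmetric: ν_𝕂(f,g) = -ν_𝕂(g,f) for all f, g ∈ 𝕂×. -/
/-- An abstract (additive, surjective) discrete valuation on a field `K`:
`ν : K → ℤ` with `ν 0 = 0` by convention, multiplicative on nonzero elements,
satisfying the ultrametric inequality, and surjective onto `ℤ`. -/
structure DiscreteValuationOn (K : Type*) [Field K] where
  ν : K → ℤ
  ν_zero : ν 0 = 0
  ν_mul : ∀ {x y : K}, x ≠ 0 → y ≠ 0 → ν (x * y) = ν x + ν y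
  ν_add : ∀ {x y : K}, x ≠ 0 → y ≠ 0 → x + y ≠ 0 → min (ν x) (ν y) ≤ ν (x + y)
  surj : ∀ n : ℤ, ∃ x : K, x ≠ 0 ∧ ν x = n

namespace DiscreteValuationOn

variable {K : Type*} [Field K] (v : DiscreteValuationOn K)

lemma ν_one : v.ν 1 = 0 := by
  have h := v.ν_mul (x := (1 : K)) one_ne_zero one_ne_zero
  rw [mul_one] at h
  omega

lemma ν_neg_one : v.ν (-1 : K) = 0 := by
  have h := v.ν_mul (x := (-1 : K)) (y := (-1 : K))
    (neg_ne_zero.mpr one_ne_zero) (neg_ne_zero.mpr one_ne_zero)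
  rw [neg_mul_neg, one_mul, v.ν_one] at h
  omega

lemma ν_neg (x : K) : v.ν (-x) = v.ν x := by
  rcases eq_or_ne x 0 with rfl | hx
  · rw [neg_zero]
  · have h := v.ν_mul (x := (-1 : K)) (y := x) (neg_ne_zero.mpr one_ne_zero) hx
    rw [neg_one_mul] at h
    rw [h, v.ν_neg_one, zero_add]

/-- The valuation ring of `v`. -/
def O : Subring K where
  carrier := {x : K | x = 0 ∨ 0 ≤ v.ν x}
  zero_mem' := Or.inl rfl
  one_mem' := Or.inr (le_of_eq v.ν_one.symm)
  mul_mem' := by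
    intro x y hx hy
    rcases eq_or_ne x 0 with rfl | hx0
    · exact Or.inl (zero_mul _)
    rcases eq_or_ne y 0 with rfl | hy0
    · exact Or.inl (mul_zero _)
    rcases hx with rfl | hx
    · exact absurd rfl hx0
    rcases hy with rfl | hy
    · exact absurd rfl hy0
    refine Or.inr ?_
    rw [v.ν_mul hx0 hy0]
    omega
  add_mem' := by
    intro x y hx hy
    rcases eq_or_ne x 0 with rfl | hx0
    · simpa using hy
    rcases eq_or_ne y 0 with rfl | hy0
    · simpa using hx
    rcases eq_or_ne (x + y) 0 with h0 | h0
    · exact Or.inl h0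
    rcases hx with rfl | hx
    · exact absurd rfl hx0
    rcases hy with rfl | hy
    · exact absurd rfl hy0
    have := v.ν_add hx0 hy0 h0
    refine Or.inr ?_
    omega
  neg_mem' := by
    intro x hx
    rcases hx with rfl | hx
    · exact Or.inl neg_zero
    · exact Or.inr (by rw [v.ν_neg]; exact hx)

lemma mem_O_iff {x : K} : x ∈ v.O ↔ x = 0 ∨ 0 ≤ v.ν x := Iff.rfl

/-- The maximal ideal of the valuation ring. -/
def m : Ideal v.O where
  carrier := {x : v.O | (x : K) = 0 ∨ 0 < v.ν (x : K)}
  zero_mem' := Or.inl rfl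
  add_mem' := by
    intro a b ha hb
    have hco : ((a + b : v.O) : K) = (a : K) + (b : K) := rfl
    simp only [Set.mem_setOf_eq, hco] at *
    rcases eq_or_ne ((a : K)) 0 with h0a | h0a
    · rw [h0a, zero_add]; exact hb
    rcases eq_or_ne ((b : K)) 0 with h0b | h0b
    · rw [h0b, add_zero]; exact ha
    rcases eq_or_ne ((a : K) + (b : K)) 0 with h0 | h0
    · exact Or.inl h0
    rcases ha with h | ha
    · exact absurd h h0a
    rcases hb with h | hb
    · exact absurd h h0b
    have := v.ν_add h0a h0b h0
    exact Or.inr (by omega)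
  smul_mem' := by
    intro c x hx
    have hco : ((c • x : v.O) : K) = (c : K) * (x : K) := rfl
    simp only [Set.mem_setOf_eq, hco] at *
    rcases eq_or_ne ((c : K)) 0 with h0c | h0c
    · exact Or.inl (by rw [h0c, zero_mul])
    rcases eq_or_ne ((x : K)) 0 with h0x | h0x
    · exact Or.inl (by rw [h0x, mul_zero])
    rcases hx with h | hx
    · exact absurd h h0x
    rcases (v.mem_O_iff.mp c.2) with h | hc
    · exact absurd h h0c
    rw [v.ν_mul h0c h0x]
    exact Or.inr (by omega)

/-- Residue map `K → O/m`, sending elements outside `O` to `0`. -/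
noncomputable def res (x : K) : v.O ⧸ v.m := by
  classical exact if h : x ∈ v.O then Ideal.Quotient.mk v.m ⟨x, h⟩ else 0

/-- The one-dimensional tame symbol
`{f,g} = residue of (-1)^(ν f · ν g) · f^(ν g) · g^(-ν f)`. -/
noncomputable def tame (f g : K) : v.O ⧸ v.m :=
  v.res ((-1 : K) ^ (v.ν f * v.ν g) * f ^ (v.ν g) * g ^ (-(v.ν f)))

end DiscreteValuationOn

section TwoDimensional

variable {𝕂 K : Type*} [Field 𝕂] [Field K]

/-- The residue map `𝕂 → K` induced by a ring hom `ρ : O_𝕂 → K` on the valuation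
ring (junk value `0` outside `O_𝕂`). -/
noncomputable def DiscreteValuationOn.resVia (v₁ : DiscreteValuationOn 𝕂)
    (ρ : v₁.O →+* K) (x : 𝕂) : K := by
  classical exact if h : x ∈ v₁.O then ρ ⟨x, h⟩ else 0

/-- `ν_𝕂(f,g) := ν₂( residue of f^(ν₁ g) · g^(-ν₁ f) )`. -/
noncomputable def nuK (v₁ : DiscreteValuationOn 𝕂) (ρ : v₁.O →+* K)
    (v₂ : DiscreteValuationOn K) (f g : 𝕂) : ℤ :=
  v₂.ν (v₁.resVia ρ (f ^ (v₁.ν g) * g ^ (-(v₁.ν f))))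

end TwoDimensional

namespace DiscreteValuationOn

variable {K : Type*} [Field K] (v : DiscreteValuationOn K)

lemma ν_inv {x : K} (hx : x ≠ 0) : v.ν x⁻¹ = -v.ν x := by
  have h := v.ν_mul hx (inv_ne_zero hx)
  rw [mul_inv_cancel₀ hx, v.ν_one] at h
  omega

lemma ν_eq_neg_of_mul_eq_one {x y : K} (hxy : x * y = 1) : v.ν y = -v.ν x := by
  have h := v.ν_mul (left_ne_zero_of_mul_eq_one hxy) (right_ne_zero_of_mul_eq_one hxy)
  rw [hxy, v.ν_one] at h
  omega

lemma ν_pow {x : K} (hx : x ≠ 0) (n : ℕ) : v.ν (x ^ n) = n * v.ν x := by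
  induction n with
  | zero => simpa using v.ν_one
  | succ n ih =>
    rw [pow_succ, v.ν_mul (pow_ne_zero n hx) hx, ih]
    push_cast
    ring

lemma ν_zpow {x : K} (hx : x ≠ 0) (n : ℤ) : v.ν (x ^ n) = n * v.ν x := by
  cases n with
  | ofNat m => simpa using v.ν_pow hx m
  | negSucc m =>
    rw [zpow_negSucc, v.ν_inv (pow_ne_zero _ hx), v.ν_pow hx, Int.negSucc_eq]
    push_cast
    ring

lemma ν_zpow_mul_zpow_eq_zero {f g : K} (hf : f ≠ 0) (hg : g ≠ 0) :
    v.ν (f ^ v.ν g * g ^ (-v.ν f)) = 0 := by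
  rw [v.ν_mul (zpow_ne_zero _ hf) (zpow_ne_zero _ hg), v.ν_zpow hf, v.ν_zpow hg]
  ring

variable {L : Type*} [Field L] (ρ : v.O →+* L)

lemma resVia_of_mem {x : K} (hx : x ∈ v.O) : v.resVia ρ x = ρ ⟨x, hx⟩ :=
  dif_pos hx

lemma resVia_mul_resVia_inv {x : K} (hx₀ : x ≠ 0) (hx : v.ν x = 0) :
    v.resVia ρ x * v.resVia ρ x⁻¹ = 1 := by
  have hxO : x ∈ v.O := Or.inr hx.ge
  have hx'O : x⁻¹ ∈ v.O := Or.inr (by rw [v.ν_inv hx₀, hx, neg_zero])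
  rw [v.resVia_of_mem ρ hxO, v.resVia_of_mem ρ hx'O, ← map_mul, ← map_one ρ]
  exact congrArg ρ (Subtype.ext (mul_inv_cancel₀ hx₀))

end DiscreteValuationOn

theorem nuK_antisymmetric_general {𝕂 K : Type*} [Field 𝕂] [Field K]
    (v₁ : DiscreteValuationOn 𝕂) (ρ : v₁.O →+* K)
    (v₂ : DiscreteValuationOn K)
    (f g : 𝕂) (hf : f ≠ 0) (hg : g ≠ 0) :
    nuK v₁ ρ v₂ f g = -(nuK v₁ ρ v₂ g f) := by
  set x := f ^ v₁.ν g * g ^ (-v₁.ν f)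
  have hx₀ : x ≠ 0 := mul_ne_zero (zpow_ne_zero _ hf) (zpow_ne_zero _ hg)
  have hswap : g ^ v₁.ν f * f ^ (-v₁.ν g) = x⁻¹ := by
    rw [mul_inv, ← zpow_neg, ← zpow_neg, neg_neg, mul_comm]
  have hres := v₁.resVia_mul_resVia_inv ρ hx₀ (v₁.ν_zpow_mul_zpow_eq_zero hf hg)
  rw [nuK, nuK, hswap, v₂.ν_eq_neg_of_mul_eq_one hres, neg_neg]

/-- the map `ν_𝕂` is antisymmetric: `ν_𝕂(f,g) = -ν_𝕂(g,f)`. -/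
theorem nuK_antisymmetric {𝕂 K : Type*} [Field 𝕂] [Field K]
    (v₁ : DiscreteValuationOn 𝕂) (ρ : v₁.O →+* K)
    (hρ : Function.Surjective ρ) (hker : RingHom.ker ρ = v₁.m)
    (v₂ : DiscreteValuationOn K)
    (f g : 𝕂) (hf : f ≠ 0) (hg : g ≠ 0) :
    nuK v₁ ρ v₂ f g = -(nuK v₁ ρ v₂ g f) :=
  nuK_antisymmetric_general v₁ ρ v₂ f g hf hg
end

section
/- The two-dimensional tame symbol {f,g,h} := sgn(f,g,h) · (residue in k× of f^(ν_𝕂(g,h)) g^(ν_𝕂(h,f)) h^(ν_𝕂(f,g))), where sgn(f,g,h) = (-1)^A with A = ν_𝕂(f,g)ν_𝕂(f,h) + ν_𝕂(g,h)ν_𝕂(g,f) + ν_𝕂(h,f)ν_𝕂(h,g) + ν_𝕂(f,g)ν_𝕂(g,h)ν_𝕂(h,f), is antisymmetric: swapping any two of f,g,h inverts it. -/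
/-- The two-dimensional tame symbol
`{f,g,h} = sgn(f,g,h) · (residue in k of f^(ν_𝕂(g,h)) g^(ν_𝕂(h,f)) h^(ν_𝕂(f,g)))`,
where `sgn(f,g,h) = (-1)^A` with
`A = ν_𝕂(f,g)ν_𝕂(f,h) + ν_𝕂(g,h)ν_𝕂(g,f) + ν_𝕂(h,f)ν_𝕂(h,g) + ν_𝕂(f,g)ν_𝕂(g,h)ν_𝕂(h,f)`. -/
noncomputable def tame3 {𝕂 K : Type*} [Field 𝕂] [Field K]
    (v₁ : DiscreteValuationOn 𝕂) (ρ : v₁.O →+* K)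
    (v₂ : DiscreteValuationOn K) (f g h : 𝕂) : v₂.O ⧸ v₂.m :=
  v₂.res (v₁.resVia ρ
    ((-1 : 𝕂) ^ (nuK v₁ ρ v₂ f g * nuK v₁ ρ v₂ f h + nuK v₁ ρ v₂ g h * nuK v₁ ρ v₂ g f
        + nuK v₁ ρ v₂ h f * nuK v₁ ρ v₂ h g
        + nuK v₁ ρ v₂ f g * nuK v₁ ρ v₂ g h * nuK v₁ ρ v₂ h f)
      * f ^ (nuK v₁ ρ v₂ g h) * g ^ (nuK v₁ ρ v₂ h f) * h ^ (nuK v₁ ρ v₂ f g)))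

theorem map_zpow_of_map_mul {G₀ : Type*} [GroupWithZero G₀] (φ : G₀ → ℤ)
    (hφ : ∀ {x y : G₀}, x ≠ 0 → y ≠ 0 → φ (x * y) = φ x + φ y) {x : G₀} (hx : x ≠ 0) (n : ℤ) :
    φ (x ^ n) = n * φ x := by
  have h1 : φ 1 = 0 := by
    have := hφ (one_ne_zero' G₀) one_ne_zero
    rw [mul_one] at this
    omega
  induction n using Int.induction_on with
  | zero => simpa using h1
  | succ n ih => rw [zpow_add_one₀ hx, hφ (zpow_ne_zero n hx) hx, ih]; ring
  | pred n ih =>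
    have := hφ (zpow_ne_zero (-n - 1) hx) hx
    rw [← zpow_add_one₀ hx, sub_add_cancel, ih] at this
    linarith

theorem map_zpow_mul_zpow_mul_zpow_of_map_mul {G₀ : Type*} [GroupWithZero G₀] (φ : G₀ → ℤ)
    (hφ : ∀ {x y : G₀}, x ≠ 0 → y ≠ 0 → φ (x * y) = φ x + φ y) {x y z : G₀} (hx : x ≠ 0)
    (hy : y ≠ 0) (hz : z ≠ 0) (l m n : ℤ) :
    φ (x ^ l * y ^ m * z ^ n) = l * φ x + m * φ y + n * φ z := by
  rw [hφ (mul_ne_zero (zpow_ne_zero l hx) (zpow_ne_zero m hy)) (zpow_ne_zero n hz),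
    hφ (zpow_ne_zero l hx) (zpow_ne_zero m hy), map_zpow_of_map_mul φ hφ hx,
    map_zpow_of_map_mul φ hφ hy, map_zpow_of_map_mul φ hφ hz]

theorem neg_one_zpow_eq_inv_of_even_add {α : Type*} [DivisionRing α] {m n : ℤ}
    (h : Even (m + n)) : (-1 : α) ^ n = ((-1) ^ m)⁻¹ := by
  have hmn : (-1 : α) ^ m * (-1) ^ n = 1 := by
    rw [← zpow_add₀ (neg_ne_zero.mpr one_ne_zero), h.neg_one_zpow]
  exact eq_inv_of_mul_eq_one_right hmn

namespace DiscreteValuationOn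

section OneDimensional

variable {K : Type*} [Field K] (v : DiscreteValuationOn K)

lemma ne_zero_of_ν_eq_one {x : K} (hx : v.ν x = 1) : x ≠ 0 := by
  rintro rfl
  simp [v.ν_zero] at hx

lemma ν_mul_zpow_neg_ν {π : K} (hπ : v.ν π = 1) {x : K} (hx : x ≠ 0) :
    v.ν (x * π ^ (-v.ν x)) = 0 := by
  rw [v.ν_mul hx (zpow_ne_zero _ (v.ne_zero_of_ν_eq_one hπ)), v.ν_zpow (v.ne_zero_of_ν_eq_one hπ),
    hπ]
  ring

lemma mem_O_of_ν_eq_zero {x : K} (hx : v.ν x = 0) : x ∈ v.O := Or.inr hx.ge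

lemma res_of_mem {x : K} (hx : x ∈ v.O) : v.res x = Ideal.Quotient.mk v.m ⟨x, hx⟩ :=
  dif_pos hx

lemma res_one : v.res 1 = 1 := by
  rw [v.res_of_mem v.O.one_mem]
  exact map_one _

lemma res_mul {x y : K} (hx : x ∈ v.O) (hy : y ∈ v.O) :
    v.res (x * y) = v.res x * v.res y := by
  rw [v.res_of_mem (mul_mem hx hy), v.res_of_mem hx, v.res_of_mem hy, ← map_mul]
  rfl

end OneDimensional

section ResidueMap

variable {𝕂 K : Type*} [Field 𝕂] [Field K] (v₁ : DiscreteValuationOn 𝕂) (ρ : v₁.O →+* K)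

lemma resVia_of_mem_s8 {x : 𝕂} (hx : x ∈ v₁.O) : v₁.resVia ρ x = ρ ⟨x, hx⟩ :=
  dif_pos hx

lemma resVia_one : v₁.resVia ρ 1 = 1 := by
  rw [v₁.resVia_of_mem_s8 ρ v₁.O.one_mem]
  exact map_one _

lemma resVia_mul {x y : 𝕂} (hx : x ∈ v₁.O) (hy : y ∈ v₁.O) :
    v₁.resVia ρ (x * y) = v₁.resVia ρ x * v₁.resVia ρ y := by
  rw [v₁.resVia_of_mem_s8 ρ (mul_mem hx hy), v₁.resVia_of_mem_s8 ρ hx, v₁.resVia_of_mem_s8 ρ hy,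
    ← map_mul]
  rfl

lemma resVia_neg {x : 𝕂} (hx : x ∈ v₁.O) : v₁.resVia ρ (-x) = -v₁.resVia ρ x := by
  rw [v₁.resVia_of_mem_s8 ρ (neg_mem hx), v₁.resVia_of_mem_s8 ρ hx, ← map_neg]
  rfl

lemma resVia_ne_zero (hker : RingHom.ker ρ ≤ v₁.m) {x : 𝕂} (hx0 : x ≠ 0)
    (hx : v₁.ν x = 0) : v₁.resVia ρ x ≠ 0 := by
  rw [v₁.resVia_of_mem_s8 ρ (v₁.mem_O_of_ν_eq_zero hx)]
  intro hρx
  rcases hker hρx with h | h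
  · exact hx0 h
  · exact h.ne' hx

end ResidueMap

end DiscreteValuationOn

section RankTwo

variable {𝕂 K : Type*} [Field 𝕂] [Field K]
  (v₁ : DiscreteValuationOn 𝕂) (ρ : v₁.O →+* K) (v₂ : DiscreteValuationOn K)

noncomputable def secondValuation (π x : 𝕂) : ℤ :=
  v₂.ν (v₁.resVia ρ (x * π ^ (-v₁.ν x)))

lemma secondValuation_of_ν_eq_zero (π : 𝕂) {x : 𝕂} (hx : v₁.ν x = 0) :
    secondValuation v₁ ρ v₂ π x = v₂.ν (v₁.resVia ρ x) := by
  simp [secondValuation, hx]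

def IsRankTwoUnit (x : 𝕂) : Prop :=
  x ≠ 0 ∧ v₁.ν x = 0 ∧ v₂.ν (v₁.resVia ρ x) = 0

variable {v₁ ρ v₂}

section Uniformizer

variable (hker : RingHom.ker ρ ≤ v₁.m) {π : 𝕂} (hπ : v₁.ν π = 1)
include hker hπ

lemma secondValuation_mul {x y : 𝕂} (hx : x ≠ 0) (hy : y ≠ 0) :
    secondValuation v₁ ρ v₂ π (x * y) =
      secondValuation v₁ ρ v₂ π x + secondValuation v₁ ρ v₂ π y := by
  have hπ0 := v₁.ne_zero_of_ν_eq_one hπ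
  have hux := v₁.ν_mul_zpow_neg_ν hπ hx
  have huy := v₁.ν_mul_zpow_neg_ν hπ hy
  have hsplit : x * y * π ^ (-v₁.ν (x * y)) = x * π ^ (-v₁.ν x) * (y * π ^ (-v₁.ν y)) := by
    rw [v₁.ν_mul hx hy, neg_add, zpow_add₀ hπ0]
    ring
  rw [secondValuation, hsplit,
    v₁.resVia_mul ρ (v₁.mem_O_of_ν_eq_zero hux) (v₁.mem_O_of_ν_eq_zero huy),
    v₂.ν_mul (v₁.resVia_ne_zero ρ hker (mul_ne_zero hx (zpow_ne_zero _ hπ0)) hux)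
      (v₁.resVia_ne_zero ρ hker (mul_ne_zero hy (zpow_ne_zero _ hπ0)) huy)]
  rfl

lemma secondValuation_zpow {x : 𝕂} (hx : x ≠ 0) (n : ℤ) :
    secondValuation v₁ ρ v₂ π (x ^ n) = n * secondValuation v₁ ρ v₂ π x :=
  map_zpow_of_map_mul _ (secondValuation_mul hker hπ) hx n

lemma nuK_eq_det {f g : 𝕂} (hf : f ≠ 0) (hg : g ≠ 0) :
    nuK v₁ ρ v₂ f g =
      v₁.ν g * secondValuation v₁ ρ v₂ π f - v₁.ν f * secondValuation v₁ ρ v₂ π g := by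
  have hν : v₁.ν (f ^ v₁.ν g * g ^ (-v₁.ν f)) = 0 := by
    rw [v₁.ν_mul (zpow_ne_zero _ hf) (zpow_ne_zero _ hg), v₁.ν_zpow hf, v₁.ν_zpow hg]
    ring
  rw [nuK, ← secondValuation_of_ν_eq_zero v₁ ρ v₂ π hν,
    secondValuation_mul hker hπ (zpow_ne_zero _ hf) (zpow_ne_zero _ hg),
    secondValuation_zpow hker hπ hf, secondValuation_zpow hker hπ hg]
  ring

end Uniformizer

variable (hker : RingHom.ker ρ ≤ v₁.m)
include hker

lemma nuK_swap {f g : 𝕂} (hf : f ≠ 0) (hg : g ≠ 0) :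
    nuK v₁ ρ v₂ g f = -nuK v₁ ρ v₂ f g := by
  obtain ⟨π, -, hπ⟩ := v₁.surj 1
  rw [nuK_eq_det hker hπ hg hf, nuK_eq_det hker hπ hf hg]
  ring

lemma isRankTwoUnit_zpow_nuK_mul {f g h : 𝕂} (hf : f ≠ 0) (hg : g ≠ 0) (hh : h ≠ 0) :
    IsRankTwoUnit v₁ ρ v₂
      (f ^ nuK v₁ ρ v₂ g h * g ^ nuK v₁ ρ v₂ h f * h ^ nuK v₁ ρ v₂ f g) := by
  obtain ⟨π, -, hπ⟩ := v₁.surj 1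
  have hν := map_zpow_mul_zpow_mul_zpow_of_map_mul v₁.ν v₁.ν_mul hf hg hh
    (nuK v₁ ρ v₂ g h) (nuK v₁ ρ v₂ h f) (nuK v₁ ρ v₂ f g)
  have hsv := map_zpow_mul_zpow_mul_zpow_of_map_mul (secondValuation v₁ ρ v₂ π)
    (secondValuation_mul hker hπ) hf hg hh
    (nuK v₁ ρ v₂ g h) (nuK v₁ ρ v₂ h f) (nuK v₁ ρ v₂ f g)
  have ha := nuK_eq_det (v₂ := v₂) hker hπ hf hg
  have hb := nuK_eq_det (v₂ := v₂) hker hπ hg hh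
  have hc := nuK_eq_det (v₂ := v₂) hker hπ hh hf
  have hν0 : v₁.ν (f ^ nuK v₁ ρ v₂ g h * g ^ nuK v₁ ρ v₂ h f * h ^ nuK v₁ ρ v₂ f g) = 0 := by
    rw [hν, ha, hb, hc]
    ring
  refine ⟨mul_ne_zero (mul_ne_zero (zpow_ne_zero _ hf) (zpow_ne_zero _ hg)) (zpow_ne_zero _ hh),
    hν0, ?_⟩
  rw [← secondValuation_of_ν_eq_zero v₁ ρ v₂ π hν0, hsv, ha, hb, hc]
  ring

end RankTwo

namespace IsRankTwoUnit

variable {𝕂 K : Type*} [Field 𝕂] [Field K]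
  {v₁ : DiscreteValuationOn 𝕂} {ρ : v₁.O →+* K} {v₂ : DiscreteValuationOn K} {x : 𝕂}

lemma neg (hx : IsRankTwoUnit v₁ ρ v₂ x) : IsRankTwoUnit v₁ ρ v₂ (-x) := by
  obtain ⟨hx0, hx1, hx2⟩ := hx
  refine ⟨neg_ne_zero.mpr hx0, by rw [v₁.ν_neg, hx1], ?_⟩
  rw [v₁.resVia_neg ρ (v₁.mem_O_of_ν_eq_zero hx1), v₂.ν_neg, hx2]

lemma neg_one_zpow_mul (hx : IsRankTwoUnit v₁ ρ v₂ x) (n : ℤ) :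
    IsRankTwoUnit v₁ ρ v₂ ((-1) ^ n * x) := by
  rcases Int.even_or_odd n with hn | hn
  · rwa [hn.neg_one_zpow, one_mul]
  · rw [hn.neg_one_zpow, neg_one_mul]
    exact hx.neg

lemma res_resVia_mul_inv_eq_one (hx : IsRankTwoUnit v₁ ρ v₂ x) :
    v₂.res (v₁.resVia ρ x) * v₂.res (v₁.resVia ρ x⁻¹) = 1 := by
  obtain ⟨hx0, hx1, hx2⟩ := hx
  have hinv1 : v₁.ν x⁻¹ = 0 := by
    simpa [hx1] using v₁.ν_zpow hx0 (-1)
  have hprod : v₁.resVia ρ x * v₁.resVia ρ x⁻¹ = 1 := by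
    rw [← v₁.resVia_mul ρ (v₁.mem_O_of_ν_eq_zero hx1) (v₁.mem_O_of_ν_eq_zero hinv1),
      mul_inv_cancel₀ hx0, v₁.resVia_one ρ]
  have hinv2 : v₂.ν (v₁.resVia ρ x⁻¹) = 0 := by
    have := v₂.ν_mul (left_ne_zero_of_mul_eq_one hprod) (right_ne_zero_of_mul_eq_one hprod)
    rw [hprod, v₂.ν_one, hx2] at this
    omega
  rw [← v₂.res_mul (v₂.mem_O_of_ν_eq_zero hx2) (v₂.mem_O_of_ν_eq_zero hinv2), hprod, v₂.res_one]

end IsRankTwoUnit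

section TameSymbol

variable {𝕂 K : Type*} [Field 𝕂] [Field K]
  (v₁ : DiscreteValuationOn 𝕂) (ρ : v₁.O →+* K) (v₂ : DiscreteValuationOn K)

lemma tame3_rotate (f g h : 𝕂) : tame3 v₁ ρ v₂ g h f = tame3 v₁ ρ v₂ f g h := by
  unfold tame3
  congr 2
  ring_nf

variable {v₁ ρ v₂}

lemma tame3_mul_tame3_swap (hker : RingHom.ker ρ ≤ v₁.m) {f g h : 𝕂} (hf : f ≠ 0) (hg : g ≠ 0)
    (hh : h ≠ 0) : tame3 v₁ ρ v₂ f g h * tame3 v₁ ρ v₂ g f h = 1 := by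
  have hX := isRankTwoUnit_zpow_nuK_mul (v₂ := v₂) hker hf hg hh
  unfold tame3
  rw [nuK_swap hker hf hg, nuK_swap hker hh hf, nuK_swap hker hg hh]
  set a := nuK v₁ ρ v₂ f g
  set b := nuK v₁ ρ v₂ g h
  set c := nuK v₁ ρ v₂ h f
  set A := a * -c + b * -a + c * -b + a * b * c
  set B := -a * b + -c * a + -b * c + -a * -c * -b
  have hsign : (-1 : 𝕂) ^ B = ((-1) ^ A)⁻¹ :=
    neg_one_zpow_eq_inv_of_even_add ⟨-(a * b + b * c + c * a), by ring⟩
  have hfgh : (-1) ^ A * f ^ b * g ^ c * h ^ a = (-1) ^ A * (f ^ b * g ^ c * h ^ a) := by ring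
  have hgfh : (-1) ^ B * g ^ (-c) * f ^ (-b) * h ^ (-a) =
      ((-1) ^ A * (f ^ b * g ^ c * h ^ a))⁻¹ := by
    rw [hsign, zpow_neg, zpow_neg, zpow_neg]
    ring
  rw [hfgh, hgfh]
  exact (hX.neg_one_zpow_mul A).res_resVia_mul_inv_eq_one

end TameSymbol

theorem tame3_antisymmetric_general {𝕂 K : Type*} [Field 𝕂] [Field K]
    (v₁ : DiscreteValuationOn 𝕂) (ρ : v₁.O →+* K)
    (hker : RingHom.ker ρ = v₁.m)
    (v₂ : DiscreteValuationOn K)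
    (f g h : 𝕂) (hf : f ≠ 0) (hg : g ≠ 0) (hh : h ≠ 0) :
    tame3 v₁ ρ v₂ f g h * tame3 v₁ ρ v₂ g f h = 1 ∧
    tame3 v₁ ρ v₂ f g h * tame3 v₁ ρ v₂ f h g = 1 ∧
    tame3 v₁ ρ v₂ f g h * tame3 v₁ ρ v₂ h g f = 1 := by
  have hswap := tame3_mul_tame3_swap (v₂ := v₂) hker.le hf hg hh
  refine ⟨hswap, ?_, ?_⟩
  · rwa [tame3_rotate v₁ ρ v₂ g f h]
  · rwa [← tame3_rotate v₁ ρ v₂ h g f]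

/-- the two-dimensional tame symbol is antisymmetric:
swapping any two of `f, g, h` inverts it. -/
theorem tame3_antisymmetric {𝕂 K : Type*} [Field 𝕂] [Field K]
    (v₁ : DiscreteValuationOn 𝕂) (ρ : v₁.O →+* K)
    (hρ : Function.Surjective ρ) (hker : RingHom.ker ρ = v₁.m)
    (v₂ : DiscreteValuationOn K)
    (f g h : 𝕂) (hf : f ≠ 0) (hg : g ≠ 0) (hh : h ≠ 0) :
    tame3 v₁ ρ v₂ f g h * tame3 v₁ ρ v₂ g f h = 1 ∧
    tame3 v₁ ρ v₂ f g h * tame3 v₁ ρ v₂ f h g = 1 ∧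
    tame3 v₁ ρ v₂ f g h * tame3 v₁ ρ v₂ h g f = 1 :=
  tame3_antisymmetric_general v₁ ρ hker v₂ f g h hf hg hh
end
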